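/- Let d ≥ 2, M ≥ 1, and let λ_1, …, λ_M be real parameters with −1/(d²−1) ≤ λ_i ≤ 1. Then the product-state capacity of the convex combination of the depolarizing channels Δ_{λ_1}, …, Δ_{λ_M} satisfies sup over all ensembles {p_j, ρ_j} of d-dimensional density matrices of min_{1≤i≤M} χ({p_j, Δ_{λ_i}(ρ_j)}) = min_{1≤i≤M} χ*(Δ_{λ_i}) = log₂ d − max_{1≤i≤M} S_min(Δ_{λ_i}); in particular the supremum of the minimum equals the minimum of the suprema. -/

import Mathlib

open scoped BigOperators Classical ComplexOrder
open Matrix Filter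

/-- The von Neumann entropy of a matrix (in bits): `S(ρ) = −Σ_i μ_i log₂ μ_i`
where `μ_i` are the eigenvalues (defined to be `0` if the matrix is not Hermitian). -/
noncomputable def vnEntropy {m : Type*} [Fintype m] [DecidableEq m]
    (ρ : Matrix m m ℂ) : ℝ :=
  if h : ρ.IsHermitian then -∑ i, (h.eigenvalues i) * Real.logb 2 (h.eigenvalues i) else 0

/-- A density matrix: positive semidefinite with unit trace. -/
def IsDensityMatrix {m : Type*} [Fintype m] [DecidableEq m] (ρ : Matrix m m ℂ) : Prop :=
  ρ.PosSemidef ∧ ρ.trace = 1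

/-- An ensemble `{p_j, ρ_j}`: probabilities summing to one together with density matrices. -/
def IsEnsemble {m : Type*} [Fintype m] [DecidableEq m] {k : ℕ}
    (p : Fin k → ℝ) (ρ : Fin k → Matrix m m ℂ) : Prop :=
  (∀ j, 0 ≤ p j) ∧ (∑ j, p j) = 1 ∧ ∀ j, IsDensityMatrix (ρ j)

/-- The Holevo quantity `χ({p_j, Φ(ρ_j)}) = S(Σ_j p_j Φ(ρ_j)) − Σ_j p_j S(Φ(ρ_j))`. -/
noncomputable def holevoQ {m : Type*} [Fintype m] [DecidableEq m] {k : ℕ}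
    (Φ : Matrix m m ℂ → Matrix m m ℂ) (p : Fin k → ℝ) (ρ : Fin k → Matrix m m ℂ) : ℝ :=
  vnEntropy (∑ j, (p j : ℂ) • Φ (ρ j)) - ∑ j, p j * vnEntropy (Φ (ρ j))

/-- The Holevo capacity `χ*(Φ)`: supremum of the Holevo quantity over all ensembles. -/
noncomputable def holevoCap {m : Type*} [Fintype m] [DecidableEq m]
    (Φ : Matrix m m ℂ → Matrix m m ℂ) : ℝ :=
  sSup {x | ∃ (k : ℕ) (p : Fin k → ℝ) (ρ : Fin k → Matrix m m ℂ),
    IsEnsemble p ρ ∧ x = holevoQ Φ p ρ}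

/-- The minimum output entropy `S_min(Φ)`. -/
noncomputable def minOutEntropy {m : Type*} [Fintype m] [DecidableEq m]
    (Φ : Matrix m m ℂ → Matrix m m ℂ) : ℝ :=
  sInf {x | ∃ ρ, IsDensityMatrix ρ ∧ x = vnEntropy (Φ ρ)}

/-- The `d`-dimensional depolarizing channel `Δ_λ(ρ) = λρ + ((1−λ)/d)(tr ρ) I`. -/
noncomputable def depol (d : ℕ) (lam : ℝ) (ρ : Matrix (Fin d) (Fin d) ℂ) :
    Matrix (Fin d) (Fin d) ℂ :=
  (lam : ℂ) • ρ + (((1 - lam) / d : ℝ) : ℂ) • ρ.trace • (1 : Matrix (Fin d) (Fin d) ℂ)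

/-- The tensor product channel `Φ_0 ⊗ ⋯ ⊗ Φ_{n−1}` acting on matrices on `(ℂ^d)^{⊗n}`,
defined by linearity from its action on tensor products of matrix units. -/
noncomputable def tensorChannel {d n : ℕ}
    (Φ : Fin n → (Matrix (Fin d) (Fin d) ℂ → Matrix (Fin d) (Fin d) ℂ))
    (ρ : Matrix (Fin n → Fin d) (Fin n → Fin d) ℂ) :
    Matrix (Fin n → Fin d) (Fin n → Fin d) ℂ :=
  fun a b => ∑ x : Fin n → Fin d, ∑ y : Fin n → Fin d,
    ρ x y * ∏ k, (Φ k (Matrix.single (x k) (y k) 1)) (a k) (b k)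

/-- The `n`-fold action of the periodic channel with branches `Δ_{λ_0}, …, Δ_{λ_{L−1}}`:
`Ω_per^{(n)}(ρ) = (1/L) Σ_{i=0}^{L−1} (Δ_{λ_i} ⊗ Δ_{λ_{i+1}} ⊗ ⋯ ⊗ Δ_{λ_{i+n−1}})(ρ)`,
indices mod `L`. -/
noncomputable def periodicChannel {d L : ℕ} (hL : 0 < L) (lam : Fin L → ℝ) (n : ℕ)
    (ρ : Matrix (Fin n → Fin d) (Fin n → Fin d) ℂ) :
    Matrix (Fin n → Fin d) (Fin n → Fin d) ℂ :=
  (1 / (L : ℂ)) • ∑ i : Fin L,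
    tensorChannel (fun k : Fin n => depol d (lam ⟨(i.val + k.val) % L, Nat.mod_lt _ hL⟩)) ρ

/-!
The depolarizing channel `Δ_λ` acts on the spectrum of a density matrix by `μ ↦ μ a + (1 - μ) b`,
where `a = λ + (1 - λ)/d` and `b = (1 - λ)/d` are the eigenvalues of the output of a pure state.
By convexity of `x log x`, every output therefore has entropy at least that of a pure-state
output, `S_min(Δ_λ) = -(a log a + (d - 1) b log b)`, and at most `log d`; so every Holevo quantity
is bounded by `log d - S_min(Δ_λ)`. The uniform ensemble of computational basis states attains
this bound for all `λ` at once (its average `I/d` is fixed by every `Δ_λ`), so the supremum of the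
minimum over the branches is the minimum of their capacities.
-/

open Real

section ConvexCombination

variable {ι : Type*} [Fintype ι]

theorem ConvexOn.sum_map_convex_comb_le {s : Set ℝ} {f : ℝ → ℝ} (hf : ConvexOn ℝ s f)
    {a b : ℝ} (ha : a ∈ s) (hb : b ∈ s) {μ : ι → ℝ} (hμ0 : ∀ j, 0 ≤ μ j)
    (hμ1 : ∑ j, μ j = 1) :
    ∑ j, f (μ j * a + (1 - μ j) * b) ≤ f a + (Fintype.card ι - 1) * f b := by
  have hμle (j : ι) : μ j ≤ 1 :=
    hμ1 ▸ Finset.single_le_sum (fun i _ => hμ0 i) (Finset.mem_univ j)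
  calc ∑ j, f (μ j * a + (1 - μ j) * b)
      ≤ ∑ j, (μ j * f a + (1 - μ j) * f b) :=
        Finset.sum_le_sum fun j _ => hf.2 ha hb (hμ0 j) (sub_nonneg.2 (hμle j)) (by ring)
    _ = f a + (Fintype.card ι - 1) * f b := by
        simp [Finset.sum_add_distrib, ← Finset.sum_mul, hμ1]

theorem convexOn_mul_logb {b : ℝ} (hb : 1 ≤ b) :
    ConvexOn ℝ (Set.Ici 0) fun x => x * logb b x := by
  refine (convexOn_mul_log.smul (inv_nonneg.2 (log_nonneg hb))).congr fun x _ => ?_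
  simp only [logb, smul_eq_mul]
  ring

theorem neg_logb_card_le_sum_mul_logb {b : ℝ} (hb : 1 ≤ b) {μ : ι → ℝ}
    (hμ0 : ∀ j, 0 ≤ μ j) (hμ1 : ∑ j, μ j = 1) :
    -logb b (Fintype.card ι) ≤ ∑ j, μ j * logb b (μ j) := by
  have hn : (0 : ℝ) < Fintype.card ι := by
    rcases isEmpty_or_nonempty ι with h | h
    · simp at hμ1
    · exact_mod_cast Fintype.card_pos
  have jensen := (convexOn_mul_logb hb).map_sum_le (t := Finset.univ)
    (w := fun _ => (Fintype.card ι : ℝ)⁻¹) (p := μ) (fun _ _ => by positivity)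
    (by simp [hn.ne']) (fun j _ => hμ0 j)
  simp only [smul_eq_mul, ← Finset.mul_sum, hμ1, mul_one, logb_inv] at jensen
  nlinarith [mul_le_mul_of_nonneg_left jensen hn.le, mul_inv_cancel₀ hn.ne']

end ConvexCombination

section DensityMatrix

variable {m : Type*} [Fintype m] [DecidableEq m]

theorem Matrix.IsHermitian.map_eigenvalues_eq_of_eq_unitary_conj {A U : Matrix m m ℂ}
    (hA : A.IsHermitian) (hU : U ∈ unitaryGroup m ℂ) {v : m → ℝ}
    (hAv : A = U * diagonal (fun j => (v j : ℂ)) * star U) :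
    Finset.univ.val.map hA.eigenvalues = Finset.univ.val.map v := by
  apply Multiset.map_injective Complex.ofReal_injective
  have hchar : A.charpoly = (diagonal fun j => (v j : ℂ)).charpoly := by
    rw [hAv, charpoly_mul_comm, ← mul_assoc, (mem_unitaryGroup_iff').1 hU, one_mul]
  have := congrArg Polynomial.roots hchar
  rw [hA.roots_charpoly_eq_eigenvalues, charpoly_diagonal, Polynomial.roots_prod _ _
    (Finset.prod_ne_zero_iff.2 fun i _ => Polynomial.X_sub_C_ne_zero _)] at this
  simpa [Multiset.map_map] using this

theorem Matrix.IsHermitian.eq_unitary_conj_diagonal {A : Matrix m m ℂ} (hA : A.IsHermitian) :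
    A = (hA.eigenvectorUnitary : Matrix m m ℂ) * diagonal (fun j => (hA.eigenvalues j : ℂ)) *
      star (hA.eigenvectorUnitary : Matrix m m ℂ) := by
  conv_lhs => rw [hA.spectral_theorem, Unitary.conjStarAlgAut_apply]
  rfl

theorem trace_unitary_conj_diagonal {U : Matrix m m ℂ} (hU : U ∈ unitaryGroup m ℂ)
    (v : m → ℂ) : trace (U * diagonal v * star U) = ∑ j, v j := by
  rw [trace_mul_cycle, (mem_unitaryGroup_iff').1 hU, one_mul, trace_diagonal]

theorem vnEntropy_unitary_conj_diagonal {U : Matrix m m ℂ} (hU : U ∈ unitaryGroup m ℂ)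
    (v : m → ℝ) :
    vnEntropy (U * diagonal (fun j => (v j : ℂ)) * star U) = -∑ j, v j * logb 2 (v j) := by
  have hA : (U * diagonal (fun j => (v j : ℂ)) * star U).IsHermitian :=
    isHermitian_mul_mul_conjTranspose U
      (isHermitian_diagonal_of_self_adjoint _ (funext fun j => Complex.conj_ofReal _))
  rw [vnEntropy, dif_pos hA, neg_inj]
  simpa [Multiset.map_map, Function.comp_def] using congrArg
    (fun s => (s.map fun x => x * logb 2 x).sum) (hA.map_eigenvalues_eq_of_eq_unitary_conj hU rfl)

theorem IsDensityMatrix.sum_eigenvalues {ρ : Matrix m m ℂ} (hρ : IsDensityMatrix ρ) :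
    ∑ j, hρ.1.1.eigenvalues j = 1 := by
  simpa using congrArg Complex.re (hρ.1.1.trace_eq_sum_eigenvalues.symm.trans hρ.2)

theorem IsDensityMatrix.vnEntropy_le_logb_card {ρ : Matrix m m ℂ} (hρ : IsDensityMatrix ρ) :
    vnEntropy ρ ≤ logb 2 (Fintype.card m) := by
  rw [vnEntropy, dif_pos hρ.1.1, neg_le]
  exact neg_logb_card_le_sum_mul_logb one_le_two hρ.1.eigenvalues_nonneg hρ.sum_eigenvalues

theorem IsEnsemble.isDensityMatrix_sum {k : ℕ} {p : Fin k → ℝ} {ρ : Fin k → Matrix m m ℂ}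
    (h : IsEnsemble p ρ) : IsDensityMatrix (∑ j, (p j : ℂ) • ρ j) := by
  obtain ⟨hp0, hp1, hρ⟩ := h
  refine ⟨posSemidef_sum _ fun j _ => (hρ j).1.smul (Complex.zero_le_real.2 (hp0 j)), ?_⟩
  simp only [trace_sum, trace_smul, (hρ _).2, smul_eq_mul, mul_one]
  exact_mod_cast hp1

end DensityMatrix

section Depolarizing

variable {d : ℕ}

theorem depol_unitary_conj_diagonal (lam : ℝ) {U : Matrix (Fin d) (Fin d) ℂ}
    (hU : U ∈ unitaryGroup (Fin d) ℂ) {v : Fin d → ℝ} (hv1 : ∑ j, v j = 1) :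
    depol d lam (U * diagonal (fun j => (v j : ℂ)) * star U) =
      U * diagonal (fun j =>
        ((v j * (lam + (1 - lam) / d) + (1 - v j) * ((1 - lam) / d) : ℝ) : ℂ)) * star U := by
  have hdiag : diagonal (fun j =>
      ((v j * (lam + (1 - lam) / d) + (1 - v j) * ((1 - lam) / d) : ℝ) : ℂ)) =
      (lam : ℂ) • diagonal (fun j => (v j : ℂ)) + (((1 - lam) / d : ℝ) : ℂ) • 1 := by
    rw [smul_one_eq_diagonal, ← diagonal_smul, diagonal_add]
    congr 1
    ext j
    simp only [Pi.smul_apply, smul_eq_mul]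
    push_cast
    ring
  rw [depol, trace_unitary_conj_diagonal hU, ← Complex.ofReal_sum, hv1, Complex.ofReal_one,
    one_smul, hdiag, mul_add, add_mul, Matrix.mul_smul, Matrix.smul_mul, Matrix.mul_smul,
    Matrix.mul_one, Matrix.smul_mul, (mem_unitaryGroup_iff).1 hU]

theorem depol_sum_smul (lam : ℝ) {ι : Type*} (s : Finset ι) (c : ι → ℂ)
    (ρ : ι → Matrix (Fin d) (Fin d) ℂ) :
    depol d lam (∑ j ∈ s, c j • ρ j) = ∑ j ∈ s, c j • depol d lam (ρ j) := by
  simp only [depol, trace_sum, trace_smul, Finset.smul_sum, Finset.sum_smul, smul_add,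
    Finset.sum_add_distrib, smul_comm (c _), smul_smul, smul_eq_mul, mul_assoc, mul_comm (c _)]

theorem depol_smul_one (lam : ℝ) (hd : d ≠ 0) (c : ℂ) :
    depol d lam (c • 1) = c • 1 := by
  rw [depol, trace_smul, trace_one, Fintype.card_fin, smul_smul, smul_smul, ← add_smul]
  congr 1
  push_cast
  field_simp
  ring

/-- The CPTP range `λ ≥ -1/(d²-1)` lies inside the positivity range `λ ≥ -1/(d-1)`. -/
theorem depol_pure_spectrum_nonneg {lam : ℝ} (hd : 2 ≤ d)
    (hlam : -(1 / ((d : ℝ) ^ 2 - 1)) ≤ lam ∧ lam ≤ 1) :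
    0 ≤ lam + (1 - lam) / d ∧ 0 ≤ (1 - lam) / d := by
  obtain ⟨hlow, hhigh⟩ := hlam
  have hd' : (2 : ℝ) ≤ d := by exact_mod_cast hd
  have hd2 : (0 : ℝ) < (d : ℝ) ^ 2 - 1 := by nlinarith
  have : -lam * ((d : ℝ) ^ 2 - 1) ≤ 1 := (le_div_iff₀ hd2).1 (by linarith)
  refine ⟨?_, div_nonneg (by linarith) (by linarith)⟩
  rw [← mul_le_mul_iff_of_pos_right (show (0 : ℝ) < d by linarith), zero_mul, add_mul,
    div_mul_cancel₀ _ (by positivity)]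
  nlinarith

theorem trace_depol (lam : ℝ) (hd : d ≠ 0) (ρ : Matrix (Fin d) (Fin d) ℂ) :
    (depol d lam ρ).trace = ρ.trace := by
  have hd' : (d : ℂ) ≠ 0 := Nat.cast_ne_zero.2 hd
  rw [depol, trace_add, trace_smul, trace_smul, trace_smul, trace_one, Fintype.card_fin]
  simp only [Complex.ofReal_div, Complex.ofReal_sub, Complex.ofReal_one, Complex.ofReal_natCast,
    smul_eq_mul]
  field_simp
  ring

theorem IsDensityMatrix.depol {lam : ℝ} (hd : d ≠ 0) (ha : 0 ≤ lam + (1 - lam) / d)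
    (hb : 0 ≤ (1 - lam) / d) {ρ : Matrix (Fin d) (Fin d) ℂ} (hρ : IsDensityMatrix ρ) :
    IsDensityMatrix (depol d lam ρ) := by
  refine ⟨?_, (trace_depol lam hd ρ).trans hρ.2⟩
  have hH := hρ.1.1
  have hμ0 := hρ.1.eigenvalues_nonneg
  have hμ1 := hρ.sum_eigenvalues
  rw [hH.eq_unitary_conj_diagonal, depol_unitary_conj_diagonal lam hH.eigenvectorUnitary.2 hμ1]
  refine (PosSemidef.diagonal fun j => Complex.zero_le_real.2 ?_).mul_mul_conjTranspose_same _
  have hμle : hH.eigenvalues j ≤ 1 :=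
    hμ1 ▸ Finset.single_le_sum (fun i _ => hμ0 i) (Finset.mem_univ j)
  exact add_nonneg (mul_nonneg (hμ0 j) ha) (mul_nonneg (sub_nonneg.2 hμle) hb)

theorem IsEnsemble.depol {lam : ℝ} (hd : d ≠ 0) (ha : 0 ≤ lam + (1 - lam) / d)
    (hb : 0 ≤ (1 - lam) / d) {k : ℕ} {p : Fin k → ℝ} {ρ : Fin k → Matrix (Fin d) (Fin d) ℂ}
    (h : IsEnsemble p ρ) :
    IsEnsemble p fun j => depol d lam (ρ j) :=
  ⟨h.1, h.2.1, fun j => (h.2.2 j).depol hd ha hb⟩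

noncomputable def depolMinOutEntropy (d : ℕ) (lam : ℝ) : ℝ :=
  -((lam + (1 - lam) / d) * logb 2 (lam + (1 - lam) / d) +
    (d - 1) * ((1 - lam) / d * logb 2 ((1 - lam) / d)))

theorem depolMinOutEntropy_le_vnEntropy_depol {lam : ℝ} (ha : 0 ≤ lam + (1 - lam) / d)
    (hb : 0 ≤ (1 - lam) / d) {ρ : Matrix (Fin d) (Fin d) ℂ} (hρ : IsDensityMatrix ρ) :
    depolMinOutEntropy d lam ≤ vnEntropy (depol d lam ρ) := by
  have hH := hρ.1.1
  rw [hH.eq_unitary_conj_diagonal,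
    depol_unitary_conj_diagonal lam hH.eigenvectorUnitary.2 hρ.sum_eigenvalues,
    vnEntropy_unitary_conj_diagonal hH.eigenvectorUnitary.2, depolMinOutEntropy, neg_le_neg_iff]
  simpa using (convexOn_mul_logb one_le_two).sum_map_convex_comb_le (Set.mem_Ici.2 ha)
    (Set.mem_Ici.2 hb) hρ.1.eigenvalues_nonneg hρ.sum_eigenvalues

theorem vnEntropy_depol_single (lam : ℝ) (j : Fin d) :
    vnEntropy (depol d lam (single j j 1)) = depolMinOutEntropy d lam := by
  have hsingle : single j j (1 : ℂ) =
      1 * diagonal (fun t => ((Pi.single j 1 : Fin d → ℝ) t : ℂ)) * star 1 := by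
    rw [one_mul, star_one, mul_one, ← diagonal_single]
    congr 1
    ext t
    by_cases h : t = j <;> simp [h]
  rw [hsingle, depol_unitary_conj_diagonal lam (one_mem _) (by simp),
    vnEntropy_unitary_conj_diagonal (one_mem _), depolMinOutEntropy, neg_inj,
    Fintype.sum_eq_add_sum_compl j]
  have hcard : ((({j}ᶜ : Finset (Fin d)).card : ℕ) : ℝ) = d - 1 := by
    rw [Finset.card_compl, Finset.card_singleton, Fintype.card_fin, Nat.cast_sub j.pos,
      Nat.cast_one]
  rw [Finset.sum_congr rfl (g := fun _ => (1 - lam) / d * logb 2 ((1 - lam) / d)) fun i hi => by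
    simp [Pi.single_eq_of_ne (Finset.mem_compl.1 hi ∘ Finset.mem_singleton.2)],
    Finset.sum_const, nsmul_eq_mul, hcard]
  simp

theorem holevoQ_depol_le {lam : ℝ} (hd : d ≠ 0) (ha : 0 ≤ lam + (1 - lam) / d)
    (hb : 0 ≤ (1 - lam) / d) {k : ℕ} {p : Fin k → ℝ} {ρ : Fin k → Matrix (Fin d) (Fin d) ℂ}
    (h : IsEnsemble p ρ) :
    holevoQ (depol d lam) p ρ ≤ logb 2 d - depolMinOutEntropy d lam := by
  have hmix : vnEntropy (∑ j, (p j : ℂ) • depol d lam (ρ j)) ≤ logb 2 d := by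
    simpa using (h.depol hd ha hb).isDensityMatrix_sum.vnEntropy_le_logb_card
  have hmin : depolMinOutEntropy d lam ≤ ∑ j, p j * vnEntropy (depol d lam (ρ j)) :=
    calc depolMinOutEntropy d lam = ∑ j, p j * depolMinOutEntropy d lam := by
          rw [← Finset.sum_mul, h.2.1, one_mul]
      _ ≤ _ := Finset.sum_le_sum fun j _ => mul_le_mul_of_nonneg_left
          (depolMinOutEntropy_le_vnEntropy_depol ha hb (h.2.2 j)) (h.1 j)
  rw [holevoQ]
  linarith

theorem isEnsemble_uniform_single (hd : d ≠ 0) :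
    IsEnsemble (fun _ : Fin d => (d : ℝ)⁻¹) fun j => single j j (1 : ℂ) := by
  refine ⟨fun _ => by positivity, by simp [hd], fun j => ⟨?_, trace_single_eq_same _ _⟩⟩
  dsimp only
  rw [← diagonal_single]
  exact PosSemidef.diagonal fun t => by by_cases h : t = j <;> simp [h]

theorem holevoQ_depol_uniform_single (lam : ℝ) (hd : d ≠ 0) :
    holevoQ (depol d lam) (fun _ => (d : ℝ)⁻¹) (fun j => single j j 1) =
      logb 2 d - depolMinOutEntropy d lam := by
  have hmix : ∑ j : Fin d, (((d : ℝ)⁻¹ : ℝ) : ℂ) • depol d lam (single j j 1) =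
      1 * diagonal (fun _ => (((d : ℝ)⁻¹ : ℝ) : ℂ)) * star 1 := by
    rw [← depol_sum_smul, ← Finset.smul_sum, sum_single_one, depol_smul_one lam hd, one_mul,
      star_one, mul_one, smul_one_eq_diagonal]
  rw [holevoQ, hmix, vnEntropy_unitary_conj_diagonal (one_mem _)]
  simp only [vnEntropy_depol_single, Finset.sum_const, Finset.card_univ, Fintype.card_fin,
    nsmul_eq_mul, logb_inv]
  field_simp

theorem holevoCap_depol {lam : ℝ} (hd : d ≠ 0) (ha : 0 ≤ lam + (1 - lam) / d)
    (hb : 0 ≤ (1 - lam) / d) :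
    holevoCap (depol d lam) = logb 2 d - depolMinOutEntropy d lam := by
  refine IsGreatest.csSup_eq ⟨⟨d, _, _, isEnsemble_uniform_single hd,
    (holevoQ_depol_uniform_single lam hd).symm⟩, ?_⟩
  rintro x ⟨k, p, ρ, h, rfl⟩
  exact holevoQ_depol_le hd ha hb h

theorem minOutEntropy_depol {lam : ℝ} (hd : d ≠ 0) (ha : 0 ≤ lam + (1 - lam) / d)
    (hb : 0 ≤ (1 - lam) / d) :
    minOutEntropy (depol d lam) = depolMinOutEntropy d lam := by
  obtain ⟨j⟩ : Nonempty (Fin d) := ⟨⟨0, Nat.pos_of_ne_zero hd⟩⟩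
  refine IsLeast.csInf_eq ⟨⟨single j j 1, (isEnsemble_uniform_single hd).2.2 j,
    (vnEntropy_depol_single lam j).symm⟩, ?_⟩
  rintro x ⟨ρ, hρ, rfl⟩
  exact depolMinOutEntropy_le_vnEntropy_depol ha hb hρ

end Depolarizing

/-- The product-state capacity of a convex combination of depolarizing
channels: the supremum over ensembles of the minimum of the branch Holevo quantities
equals the minimum of the Holevo capacities, which is
`log₂ d − max_i S_min(Δ_{λ_i})`. -/
theorem convex_combination_product_state_capacity
    (d M : ℕ) (hd : 2 ≤ d) (hM : 1 ≤ M) (lam : Fin M → ℝ)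
    (hlam : ∀ i, -(1 / ((d : ℝ)^2 - 1)) ≤ lam i ∧ lam i ≤ 1) :
    sSup {x | ∃ (k : ℕ) (p : Fin k → ℝ) (ρ : Fin k → Matrix (Fin d) (Fin d) ℂ),
        IsEnsemble p ρ ∧ x = ⨅ i : Fin M, holevoQ (depol d (lam i)) p ρ}
      = ⨅ i : Fin M, holevoCap (depol d (lam i))
    ∧ (⨅ i : Fin M, holevoCap (depol d (lam i)))
        = Real.logb 2 d - ⨆ i : Fin M, minOutEntropy (depol d (lam i)) := by
  have : Nonempty (Fin M) := ⟨⟨0, hM⟩⟩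
  have hd0 : d ≠ 0 := by omega
  have hpos i := depol_pure_spectrum_nonneg hd (hlam i)
  have hcap i := holevoCap_depol hd0 (hpos i).1 (hpos i).2
  refine ⟨IsGreatest.csSup_eq ⟨⟨d, _, _, isEnsemble_uniform_single hd0, ?_⟩, ?_⟩, ?_⟩
  · simp only [hcap, holevoQ_depol_uniform_single _ hd0]
  · rintro x ⟨k, p, ρ, h, rfl⟩
    exact ciInf_mono (Finite.bddBelow_range _) fun i =>
      (holevoQ_depol_le hd0 (hpos i).1 (hpos i).2 h).trans_eq (hcap i).symm
  · simp only [hcap, minOutEntropy_depol hd0 (hpos _).1 (hpos _).2]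
    exact ((OrderIso.subLeft (logb 2 d)).map_ciSup (Finite.bddAbove_range _)).symm
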